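/- Let L be a Laplacian matrix with spanning tree and T₀ ≤ γ/max_i(−L_ii) for some γ ∈ (0,1). Then A = I + T₀L is a row-stochastic matrix with positive diagonal entries whose digraph has a spanning tree, and consequently lim_{k→∞}(I + T₀L)^k = 𝟏ηᵀ where ηᵀL = 0, η ≥ 0, 𝟏ᵀη = 1. -/

import Mathlib

/-
Proof idea. `A = I + T₀ L` has nonnegative off-diagonal entries `T₀ L i j`, row sums `1`, and
diagonal entries `1 - T₀ (-L i i) ≥ 1 - γ > 0`; every edge of `L` is an edge of `A`.
Since the diagonal of `A` is positive, a path of length `a` from the root `r` to `i` gives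
`(A ^ b) i r > 0` for all `b ≥ a`, so some power `A ^ N` has its column `r` bounded below by
some `δ > 0`. For a stochastic matrix with such a column, `max - min` of a vector shrinks by
the factor `1 - δ` under multiplication, so every column of `A ^ k` converges to a constant
vector. The limit is `𝟏 ηᵀ` with `η` a probability vector, and `(A ^ k) A → 𝟏 ηᵀ` gives
`ηᵀ A = ηᵀ`, i.e. `ηᵀ L = 0`.
-/

open Matrix Filter

/-- Edge relation of the digraph of a matrix `M`: a directed link from `j` to `i` when
`i ≠ j` and `M i j > 0`. -/
def edgeM {m : ℕ} (M : Matrix (Fin m) (Fin m) ℝ) (j i : Fin m) : Prop :=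
  i ≠ j ∧ 0 < M i j

/-- The digraph of `M` has a spanning tree. -/
def HasSpanningTreeM {m : ℕ} (M : Matrix (Fin m) (Fin m) ℝ) : Prop :=
  ∃ i₀ : Fin m, ∀ j : Fin m, Relation.ReflTransGen (edgeM M) i₀ j

open Finset Topology

lemma tendsto_zero_of_antitone_of_le_geometric {f : ℕ → ℝ} (hf : Antitone f)
    (hf0 : ∀ k, 0 ≤ f k) {N : ℕ} {r C : ℝ} (hr0 : 0 ≤ r) (hr1 : r < 1)
    (hfN : ∀ q, f (q * N) ≤ r ^ q * C) : Tendsto f atTop (𝓝 0) := by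
  have hbdd : BddBelow (Set.range f) := ⟨0, by rintro _ ⟨k, rfl⟩; exact hf0 k⟩
  have hgeom : Tendsto (fun q : ℕ => r ^ q * C) atTop (𝓝 0) := by
    simpa using (tendsto_pow_atTop_nhds_zero_of_lt_one hr0 hr1).mul_const C
  have hinf : ⨅ k, f k = 0 :=
    le_antisymm (ge_of_tendsto' hgeom fun q => (ciInf_le hbdd _).trans (hfN q)) (le_ciInf hf0)
  exact hinf ▸ tendsto_atTop_ciInf hf hbdd

lemma tendsto_pow_mul_eq {M : Type*} [Monoid M] [TopologicalSpace M] [ContinuousMul M]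
    [T2Space M] {a q : M} (h : Tendsto (fun k : ℕ => a ^ k) atTop (𝓝 q)) : q * a = q := by
  refine tendsto_nhds_unique ?_ ((tendsto_add_atTop_iff_nat 1).2 h)
  simpa only [pow_succ] using h.mul_const a

section Stochastic

variable {n : Type*} [Fintype n] [DecidableEq n]

lemma isClosed_rowStochastic : IsClosed (rowStochastic ℝ n : Set (Matrix n n ℝ)) := by
  have hnonneg : IsClosed {M : Matrix n n ℝ | ∀ i j, 0 ≤ M i j} := by
    simp only [Set.ofPred_forall]
    exact isClosed_iInter fun i => isClosed_iInter fun j =>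
      isClosed_le continuous_const ((continuous_apply j).comp (continuous_apply i))
  exact hnonneg.inter (isClosed_eq (continuous_id.matrix_mulVec continuous_const) continuous_const)

variable {P : Matrix n n ℝ}

lemma mem_rowStochastic_of_tendsto_pow (hP : P ∈ rowStochastic ℝ n) {Q : Matrix n n ℝ}
    (h : Tendsto (fun k : ℕ => P ^ k) atTop (𝓝 Q)) : Q ∈ rowStochastic ℝ n :=
  isClosed_rowStochastic.mem_of_tendsto h (Eventually.of_forall fun k => pow_mem hP k)

lemma mulVec_apply_le_of_le_col (hP : P ∈ rowStochastic ℝ n) {c : n} {δ M : ℝ}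
    (hδ : ∀ i, δ ≤ P i c) {x : n → ℝ} (hx : ∀ j, x j ≤ M) (i : n) :
    (P *ᵥ x) i ≤ δ * x c + (1 - δ) * M := by
  have hgap : P i c * (M - x c) ≤ ∑ j, P i j * (M - x j) :=
    single_le_sum (f := fun j => P i j * (M - x j))
      (fun j _ => mul_nonneg (hP.1 i j) (sub_nonneg.2 (hx j))) (mem_univ c)
  have hsum : ∑ j, P i j * (M - x j) = M - (P *ᵥ x) i := by
    simp only [mul_sub, sum_sub_distrib, ← sum_mul, sum_row_of_mem_rowStochastic hP, one_mul,
      mulVec, dotProduct]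
  nlinarith [hδ i, hx c]

variable [Nonempty n]

lemma sup'_mulVec_le_of_le_col (hP : P ∈ rowStochastic ℝ n) {c : n} {δ : ℝ}
    (hδ : ∀ i, δ ≤ P i c) (x : n → ℝ) :
    univ.sup' univ_nonempty (P *ᵥ x) ≤ δ * x c + (1 - δ) * univ.sup' univ_nonempty x :=
  sup'_le _ _ fun i _ => mulVec_apply_le_of_le_col hP hδ (fun j => le_sup' x (mem_univ j)) i

lemma le_inf'_mulVec_of_le_col (hP : P ∈ rowStochastic ℝ n) {c : n} {δ : ℝ}
    (hδ : ∀ i, δ ≤ P i c) (x : n → ℝ) :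
    δ * x c + (1 - δ) * univ.inf' univ_nonempty x ≤ univ.inf' univ_nonempty (P *ᵥ x) := by
  refine le_inf' _ _ fun i _ => ?_
  have := mulVec_apply_le_of_le_col hP hδ (x := -x) (M := -univ.inf' univ_nonempty x)
    (fun j => neg_le_neg (inf'_le x (mem_univ j))) i
  simp only [mulVec_neg, Pi.neg_apply] at this
  linarith

lemma sup'_mulVec_le (hP : P ∈ rowStochastic ℝ n) (x : n → ℝ) :
    univ.sup' univ_nonempty (P *ᵥ x) ≤ univ.sup' univ_nonempty x := by
  simpa using sup'_mulVec_le_of_le_col hP (c := Classical.arbitrary n) (fun i => hP.1 i _) x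

lemma inf'_le_inf'_mulVec (hP : P ∈ rowStochastic ℝ n) (x : n → ℝ) :
    univ.inf' univ_nonempty x ≤ univ.inf' univ_nonempty (P *ᵥ x) := by
  simpa using le_inf'_mulVec_of_le_col hP (c := Classical.arbitrary n) (fun i => hP.1 i _) x

lemma sup'_sub_inf'_mulVec_le (hP : P ∈ rowStochastic ℝ n) {c : n} {δ : ℝ}
    (hδ : ∀ i, δ ≤ P i c) (x : n → ℝ) :
    univ.sup' univ_nonempty (P *ᵥ x) - univ.inf' univ_nonempty (P *ᵥ x) ≤
      (1 - δ) * (univ.sup' univ_nonempty x - univ.inf' univ_nonempty x) := by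
  linarith [sup'_mulVec_le_of_le_col hP hδ x, le_inf'_mulVec_of_le_col hP hδ x]

theorem exists_tendsto_pow_mulVec_const (hP : P ∈ rowStochastic ℝ n) {N : ℕ} {c : n}
    (hcol : ∀ i, 0 < (P ^ N) i c) (x : n → ℝ) :
    ∃ a : ℝ, Tendsto (fun k : ℕ => P ^ k *ᵥ x) atTop (𝓝 fun _ => a) := by
  set y : ℕ → n → ℝ := fun k => P ^ k *ᵥ x
  have hy : ∀ j k, y (j + k) = P ^ j *ᵥ y k := fun j k => by simp only [y, pow_add, mulVec_mulVec]
  set M : ℕ → ℝ := fun k => univ.sup' univ_nonempty (y k)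
  set m : ℕ → ℝ := fun k => univ.inf' univ_nonempty (y k)
  have hM : Antitone M := antitone_nat_of_succ_le fun k => by
    simpa only [M, add_comm k, hy, pow_one] using sup'_mulVec_le hP (y k)
  have hm : Monotone m := monotone_nat_of_le_succ fun k => by
    simpa only [m, add_comm k, hy, pow_one] using inf'_le_inf'_mulVec hP (y k)
  have hmM : ∀ k, m k ≤ M k := fun k => (inf'_le _ (mem_univ c)).trans (le_sup' _ (mem_univ c))
  set δ := univ.inf' univ_nonempty fun i => (P ^ N) i c
  have hδ : ∀ i, δ ≤ (P ^ N) i c := fun i => inf'_le _ (mem_univ i)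
  have hδ0 : 0 < δ := (lt_inf'_iff _).2 fun i _ => hcol i
  have hδ1 : δ ≤ 1 := (hδ c).trans (le_one_of_mem_rowStochastic (pow_mem hP N))
  have hosc : ∀ q, M (q * N) - m (q * N) ≤ (1 - δ) ^ q * (M 0 - m 0) := by
    intro q
    induction q with
    | zero => simp
    | succ q ih =>
      calc M ((q + 1) * N) - m ((q + 1) * N)
          ≤ (1 - δ) * (M (q * N) - m (q * N)) := by
            simpa only [M, m, add_mul, one_mul, add_comm _ N, hy] using
              sup'_sub_inf'_mulVec_le (pow_mem hP N) hδ (y (q * N))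
        _ ≤ (1 - δ) * ((1 - δ) ^ q * (M 0 - m 0)) := by gcongr
        _ = (1 - δ) ^ (q + 1) * (M 0 - m 0) := by ring
  have hosc0 : Tendsto (fun k => M k - m k) atTop (𝓝 0) :=
    tendsto_zero_of_antitone_of_le_geometric (fun a b hab => sub_le_sub (hM hab) (hm hab))
      (fun k => sub_nonneg.2 (hmM k)) (by linarith) (by linarith) hosc
  have hMlim : Tendsto M atTop (𝓝 (⨅ k, M k)) :=
    tendsto_atTop_ciInf hM ⟨m 0, by rintro _ ⟨k, rfl⟩; exact (hm k.zero_le).trans (hmM k)⟩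
  have hmlim : Tendsto m atTop (𝓝 (⨅ k, M k)) := by simpa using hMlim.sub hosc0
  exact ⟨⨅ k, M k, tendsto_pi_nhds.2 fun i => tendsto_of_tendsto_of_tendsto_of_le_of_le
    hmlim hMlim (fun k => inf'_le _ (mem_univ i)) (fun k => le_sup' _ (mem_univ i))⟩

theorem exists_stationary_tendsto_pow (hP : P ∈ rowStochastic ℝ n) {N : ℕ} {c : n}
    (hcol : ∀ i, 0 < (P ^ N) i c) :
    ∃ η : n → ℝ, (∀ j, 0 ≤ η j) ∧ ∑ j, η j = 1 ∧ η ᵥ* P = η ∧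
      Tendsto (fun k : ℕ => P ^ k) atTop (𝓝 (of fun _ j => η j)) := by
  choose η hη using fun j => exists_tendsto_pow_mulVec_const hP hcol (Pi.single j 1)
  have hlim : Tendsto (fun k : ℕ => P ^ k) atTop (𝓝 (of fun _ j => η j)) :=
    tendsto_pi_nhds.2 fun i => tendsto_pi_nhds.2 fun j => by
      simpa [mulVec_single_one] using tendsto_pi_nhds.1 (hη j) i
  have hQ := mem_rowStochastic_of_tendsto_pow hP hlim
  have hfix := tendsto_pow_mul_eq hlim
  obtain ⟨i⟩ := ‹Nonempty n›
  refine ⟨η, fun j => hQ.1 i j, by simpa using sum_row_of_mem_rowStochastic hQ i, ?_, hlim⟩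
  ext j
  simpa [mul_apply, vecMul, dotProduct] using congrFun (congrFun hfix i) j

end Stochastic

lemma mul_lt_one_of_le_div {a S t γ : ℝ} (ha : a ≤ S) (ht : 0 ≤ t) (htS : t ≤ γ / S)
    (hγ : γ < 1) : t * a < 1 := by
  rcases le_or_gt S 0 with hS | hS
  · nlinarith
  · calc t * a ≤ t * S := by gcongr
      _ ≤ γ := (le_div_iff₀ hS).1 htS
      _ < 1 := hγ

section Laplacian

variable {n : Type*} [DecidableEq n] {L : Matrix n n ℝ} {t : ℝ}

lemma one_add_smul_apply_self (i : n) : (1 + t • L) i i = 1 + t * L i i := by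
  simp

lemma one_add_smul_apply_of_ne {i j : n} (h : i ≠ j) : (1 + t • L) i j = t * L i j := by
  simp [one_apply_ne h]

lemma one_add_smul_mem_rowStochastic [Fintype n] (h_offdiag : ∀ i j, i ≠ j → 0 ≤ L i j)
    (h_rowsum : ∀ i, ∑ j, L i j = 0) (ht : 0 ≤ t) (hdiag : ∀ i, 0 ≤ 1 + t * L i i) :
    1 + t • L ∈ rowStochastic ℝ n := by
  refine mem_rowStochastic_iff_sum.2 ⟨fun i j => ?_, fun i => ?_⟩
  · rcases eq_or_ne i j with rfl | h
    · simpa only [one_add_smul_apply_self] using hdiag i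
    · simpa only [one_add_smul_apply_of_ne h] using mul_nonneg ht (h_offdiag i j h)
  · simp [sum_add_distrib, ← mul_sum, h_rowsum i, one_apply]

end Laplacian

section Digraph

variable {m : ℕ}

lemma HasSpanningTreeM.mono {M M' : Matrix (Fin m) (Fin m) ℝ} (h : HasSpanningTreeM M)
    (hMM' : ∀ j i, edgeM M j i → edgeM M' j i) : HasSpanningTreeM M' :=
  let ⟨r, hr⟩ := h
  ⟨r, fun j => Relation.ReflTransGen.mono hMM' _ _ (hr j)⟩

lemma edgeM_one_add_smul {L : Matrix (Fin m) (Fin m) ℝ} {t : ℝ} (ht : 0 < t) {j i : Fin m}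
    (h : edgeM L j i) : edgeM (1 + t • L) j i :=
  ⟨h.1, by rw [one_add_smul_apply_of_ne h.1]; exact mul_pos ht h.2⟩

lemma pow_succ_apply_pos {n : Type*} [Fintype n] [DecidableEq n] {P : Matrix n n ℝ}
    (hP : ∀ i j, 0 ≤ P i j) {a : ℕ} {i l c : n} (hil : 0 < P i l) (hlc : 0 < (P ^ a) l c) :
    0 < (P ^ (a + 1)) i c := by
  rw [pow_succ', mul_apply]
  exact sum_pos' (fun k _ => mul_nonneg (hP i k) (pow_apply_nonneg hP a k c))
    ⟨l, mem_univ l, mul_pos hil hlc⟩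

lemma pow_apply_pos_of_le {n : Type*} [Fintype n] [DecidableEq n] {P : Matrix n n ℝ}
    (hP : ∀ i j, 0 ≤ P i j) (hdiag : ∀ i, 0 < P i i) {a b : ℕ} {i c : n}
    (h : 0 < (P ^ a) i c) (hab : a ≤ b) : 0 < (P ^ b) i c := by
  induction b, hab using Nat.le_induction with
  | base => exact h
  | succ b _ ih => exact pow_succ_apply_pos hP (hdiag i) ih

variable {P : Matrix (Fin m) (Fin m) ℝ}

lemma exists_pow_apply_pos_of_reflTransGen (hP : ∀ i j, 0 ≤ P i j) {c i : Fin m}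
    (h : Relation.ReflTransGen (edgeM P) c i) : ∃ a, 0 < (P ^ a) i c := by
  induction h with
  | refl => exact ⟨0, by simp⟩
  | tail _ hedge ih =>
    obtain ⟨a, ha⟩ := ih
    exact ⟨a + 1, pow_succ_apply_pos hP hedge.2 ha⟩

lemma HasSpanningTreeM.exists_pow_col_pos (h : HasSpanningTreeM P) (hP : ∀ i j, 0 ≤ P i j)
    (hdiag : ∀ i, 0 < P i i) : ∃ N c, ∀ i, 0 < (P ^ N) i c := by
  obtain ⟨c, hc⟩ := h
  choose a ha using fun i => exists_pow_apply_pos_of_reflTransGen hP (hc i)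
  exact ⟨univ.sup a, c, fun i => pow_apply_pos_of_le hP hdiag (ha i) (le_sup (mem_univ i))⟩

end Digraph

/-- If `L` is a Laplacian whose digraph has a spanning tree and
`T₀ ≤ γ / max_i (-L i i)` with `γ ∈ (0,1)`, `T₀ > 0`, then `A = I + T₀ L` is
row-stochastic with positive diagonal, its digraph has a spanning tree, and
`(I + T₀L)^k → 𝟏 ηᵀ` with `ηᵀL = 0`, `η ≥ 0`, `𝟏ᵀη = 1`. -/
theorem I_plus_T0L_stochastic_and_power_limit
    {m : ℕ} [NeZero m]
    (L : Matrix (Fin m) (Fin m) ℝ)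
    (h_offdiag : ∀ i j, i ≠ j → 0 ≤ L i j)
    (h_rowsum : ∀ i, ∑ j, L i j = 0)
    (h_tree : HasSpanningTreeM L)
    (γ T₀ : ℝ) (hγ : γ ∈ Set.Ioo (0:ℝ) 1) (hT₀_pos : 0 < T₀)
    (hT₀ : T₀ ≤ γ / Finset.univ.sup' Finset.univ_nonempty (fun i => -L i i)) :
    (∀ i j, 0 ≤ ((1 : Matrix (Fin m) (Fin m) ℝ) + T₀ • L) i j) ∧
    (∀ i, ∑ j, ((1 : Matrix (Fin m) (Fin m) ℝ) + T₀ • L) i j = 1) ∧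
    (∀ i, 0 < ((1 : Matrix (Fin m) (Fin m) ℝ) + T₀ • L) i i) ∧
    HasSpanningTreeM ((1 : Matrix (Fin m) (Fin m) ℝ) + T₀ • L) ∧
    ∃ η : Fin m → ℝ,
      η ᵥ* L = 0 ∧ (∀ i, 0 ≤ η i) ∧ ∑ i, η i = 1 ∧
      Tendsto (fun k : ℕ => ((1 : Matrix (Fin m) (Fin m) ℝ) + T₀ • L) ^ k) atTop
        (nhds (Matrix.of fun _ j => η j)) := by
  set A : Matrix (Fin m) (Fin m) ℝ := 1 + T₀ • L
  have hdiag : ∀ i, 0 < 1 + T₀ * L i i := fun i => by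
    linarith [mul_lt_one_of_le_div (le_sup' (fun i => -L i i) (mem_univ i)) hT₀_pos.le hT₀ hγ.2]
  have hAdiag : ∀ i, 0 < A i i := fun i => by simpa only [A, one_add_smul_apply_self] using hdiag i
  have hA : A ∈ rowStochastic ℝ (Fin m) :=
    one_add_smul_mem_rowStochastic h_offdiag h_rowsum hT₀_pos.le fun i => (hdiag i).le
  have htree : HasSpanningTreeM A := h_tree.mono fun _ _ => edgeM_one_add_smul hT₀_pos
  obtain ⟨N, c, hcol⟩ := htree.exists_pow_col_pos hA.1 hAdiag
  obtain ⟨η, hη0, hη1, hfix, hlim⟩ := exists_stationary_tendsto_pow hA hcol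
  refine ⟨hA.1, sum_row_of_mem_rowStochastic hA, hAdiag, htree, η, ?_, hη0, hη1, hlim⟩
  rw [vecMul_add, vecMul_one, vecMul_smul, add_eq_left, smul_eq_zero] at hfix
  exact hfix.resolve_left hT₀_pos.ne'
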